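/- arXiv:2403.17591 — 2 statements merged into one kernel-verified Lean document; each statement's English description precedes it below -/
import Mathlib

section
/- Let E : (0, a*) → ℝ and suppose there exist constants 0 < m ≤ M and p > 0 such that m (a* − a)^(p/(p+2)) ≤ E(a) ≤ M (a* − a)^(p/(p+2)) for all a close to a*. Suppose further that ρ : (0, a*) → ℝ≥0 satisfies E(b) ≤ E(a) + (a − b) ρ(a) for all 0 < b < a < a*. Then there exists L > 0 such that ρ(a) ≥ L (a* − a)^(−2/(p+2)) for all a sufficiently close to a*. -/
/-! Compare the trial-state inequality at `b = a - δ (a* - a)` with the two-sided bound on `E`: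
with `s = a* - a` and `c = 1 + δ`, it reads `m (c s)^α ≤ M s^α + δ s ρ(a)`, where
`α = p / (p + 2)`. Taking `δ` so large that `m c^α > M` leaves
`ρ(a) ≥ (m c^α - M) / δ · s^(α - 1)`, and `α - 1 = -2 / (p + 2)`. -/

open Filter Real

theorem exists_one_lt_and_lt_mul_rpow {α : ℝ} (hα : 0 < α) {m : ℝ} (hm : 0 < m) (M : ℝ) :
    ∃ c, 1 < c ∧ M < m * c ^ α := by
  obtain ⟨c, hc1, hc⟩ :=
    ((eventually_gt_atTop 1).and ((tendsto_rpow_atTop hα).eventually_gt_atTop (M / m))).exists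
  exact ⟨c, hc1, by rwa [div_lt_iff₀' hm] at hc⟩

theorem le_of_rpow_bounds_of_trial {α m M c s Ea Eb r : ℝ} (hs : 0 < s) (hc : 1 < c)
    (hlow : m * (c * s) ^ α ≤ Eb) (hup : Ea ≤ M * s ^ α) (htrial : Eb ≤ Ea + (c - 1) * s * r) :
    (m * c ^ α - M) / (c - 1) * s ^ (α - 1) ≤ r := by
  have hkey : (m * c ^ α - M) * s ^ α ≤ (c - 1) * s * r := by
    rw [mul_rpow (by linarith) hs.le] at hlow
    linarith
  have hcs : 0 < (c - 1) * s := mul_pos (sub_pos.2 hc) hs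
  rw [rpow_sub_one hs.ne']
  calc (m * c ^ α - M) / (c - 1) * (s ^ α / s) = (m * c ^ α - M) * s ^ α / ((c - 1) * s) := by
        field_simp
    _ ≤ r := by rwa [div_le_iff₀ hcs, mul_comm r]

theorem stmt_5_general (astar p m M : ℝ) (E ρ : ℝ → ℝ)
    (hastar : 0 < astar) (hp : 0 < p) (hm : 0 < m)
    (hbound : ∃ ε > 0, ∀ a, astar - ε < a → a < astar →
      m * (astar - a) ^ (p / (p + 2)) ≤ E a ∧ E a ≤ M * (astar - a) ^ (p / (p + 2)))
    (htrial : ∀ a b, 0 < b → b < a → a < astar → E b ≤ E a + (a - b) * ρ a) :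
    ∃ L > 0, ∃ ε' > 0, ∀ a, astar - ε' < a → a < astar →
      ρ a ≥ L * (astar - a) ^ (-(2 : ℝ) / (p + 2)) := by
  obtain ⟨ε, hε, hb⟩ := hbound
  obtain ⟨c, hc1, hcM⟩ := exists_one_lt_and_lt_mul_rpow (div_pos hp (by linarith : 0 < p + 2)) hm M
  refine ⟨(m * c ^ (p / (p + 2)) - M) / (c - 1), div_pos (sub_pos.2 hcM) (sub_pos.2 hc1),
    min ε astar / c, by positivity, fun a ha hastar_a => ?_⟩
  have hs : 0 < astar - a := sub_pos.2 hastar_a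
  have hcs : c * (astar - a) < min ε astar := by
    rw [sub_lt_comm, lt_div_iff₀ (by linarith)] at ha
    linarith
  have hcs_ε := hcs.trans_le (min_le_left ε astar)
  have hcs_astar := hcs.trans_le (min_le_right ε astar)
  have hs_le_cs : astar - a ≤ c * (astar - a) := le_mul_of_one_le_left hs.le hc1.le
  set b := a - (c - 1) * (astar - a) with hb_def
  have hab : a - b = (c - 1) * (astar - a) := by ring
  have hab_pos : 0 < (c - 1) * (astar - a) := mul_pos (sub_pos.2 hc1) hs
  have hlow := (hb b (by linarith) (by linarith)).1
  rw [show astar - b = c * (astar - a) by ring] at hlow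
  have hexp : -(2 : ℝ) / (p + 2) = p / (p + 2) - 1 := by field_simp; ring
  rw [ge_iff_le, hexp]
  refine le_of_rpow_bounds_of_trial hs hc1 hlow (hb a (by linarith) hastar_a).2 ?_
  simpa only [hab] using htrial a b (by linarith) (by linarith) hastar_a

/-- Lower bound on `ρ(a) = ∫ ρ_{γ_a}^{5/3}` near `a*`: if
`m (a*−a)^(p/(p+2)) ≤ E(a) ≤ M (a*−a)^(p/(p+2))` near `a*` and
`E(b) ≤ E(a) + (a−b) ρ(a)` for `0 < b < a < a*`, then
`ρ(a) ≥ L (a*−a)^(−2/(p+2))` near `a*`. -/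
theorem stmt_5 (astar p m M : ℝ) (E ρ : ℝ → ℝ)
    (hastar : 0 < astar) (hp : 0 < p) (hm : 0 < m) (hmM : m ≤ M)
    (hρ0 : ∀ a, 0 < a → a < astar → 0 ≤ ρ a)
    (hbound : ∃ ε > 0, ∀ a, astar - ε < a → a < astar →
      m * (astar - a) ^ (p / (p + 2)) ≤ E a ∧ E a ≤ M * (astar - a) ^ (p / (p + 2)))
    (htrial : ∀ a b, 0 < b → b < a → a < astar → E b ≤ E a + (a - b) * ρ a) :
    ∃ L > 0, ∃ ε' > 0, ∀ a, astar - ε' < a → a < astar →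
      ρ a ≥ L * (astar - a) ^ (-(2 : ℝ) / (p + 2)) :=
  stmt_5_general astar p m M E ρ hastar hp hm hbound htrial
end

section
/- Suppose V : ℝ³ → ℝ satisfies V(x) ≤ C₁ |x − x₀|^p for |x − x₀| ≤ R (with p, C₁, R > 0), and Q ∈ L²(ℝ³) satisfies |Q(x)| ≤ C e^{−c|x|}. Then with Q^τ as above (cut-off supported in |x − x₀| ≤ 2/τ·τ = 2 ≤ R assumed), ∫ V(x)|Q^τ(x)|² dx ≤ C₁ τ^{−p} ∫ |x|^p Q(x)² dx + O(τ^{−∞}) as τ → ∞. -/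
open MeasureTheory Filter Real

lemma aux_int1d {a : ℝ} (ha : 0 < a) :
    Integrable fun t : ℝ => Real.exp (-(a * |t|)) := by
  have h1 : IntegrableOn (fun t : ℝ => Real.exp (-(a * |t|))) (Set.Ioi (0:ℝ)) := by
    refine (exp_neg_integrableOn_Ioi 0 ha).congr_fun (fun x hx => ?_) measurableSet_Ioi
    simp only [abs_of_pos (show (0:ℝ) < x from hx), neg_mul]
  have h2 : IntegrableOn (fun t : ℝ => Real.exp (-(a * |t|))) (Set.Iic (0:ℝ)) := by
    rw [← Measure.map_neg_eq_self (volume : Measure ℝ)]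
    have m : MeasurableEmbedding fun x : ℝ => -x := (Homeomorph.neg ℝ).measurableEmbedding
    rw [m.integrableOn_map_iff]
    simp_rw [Function.comp_def, abs_neg, Set.neg_preimage, Set.neg_Iic, neg_zero]
    exact Iff.mpr integrableOn_Ici_iff_integrableOn_Ioi h1
  have := h2.union h1
  rwa [Set.Iic_union_Ioi, integrableOn_univ] at this

lemma aux_intE {c : ℝ} (hc : 0 < c) :
    Integrable fun x : EuclideanSpace ℝ (Fin 3) => Real.exp (-(c * ‖x‖)) := by
  have hmp := (EuclideanSpace.volume_preserving_symm_measurableEquiv_toLp (Fin 3)).symm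
  rw [← hmp.integrable_comp_emb (MeasurableEquiv.measurableEmbedding _)]
  have hprod : Integrable fun v : Fin 3 → ℝ => ∏ i, Real.exp (-(c/3 * |v i|)) :=
    Integrable.fintype_prod fun _ => aux_int1d (by positivity)
  refine hprod.mono' ?_ (ae_of_all _ fun v => ?_)
  · exact (((continuous_const.mul continuous_norm).neg.rexp).measurable.comp
      (MeasurableEquiv.measurable _)).aestronglyMeasurable
  · simp only [Function.comp_apply, Real.norm_eq_abs, abs_exp]
    rw [← Real.exp_sum]
    apply Real.exp_le_exp.2
    set x := (MeasurableEquiv.toLp 2 (Fin 3 → ℝ)).symm.symm v with hx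
    have hcoord : ∀ i, |v i| ≤ ‖x‖ := by
      intro i
      have : x i = v i := rfl
      rw [EuclideanSpace.norm_eq, ← this]
      have h1 : |x i| = Real.sqrt (‖x i‖ ^ 2) := by
        rw [Real.sqrt_sq_eq_abs]; simp
      rw [h1]
      apply Real.sqrt_le_sqrt
      exact Finset.single_le_sum (fun j _ => sq_nonneg ‖x j‖) (Finset.mem_univ i)
    have hsum : ∑ i, |v i| ≤ 3 * ‖x‖ := by
      calc ∑ i, |v i| ≤ ∑ _i : Fin 3, ‖x‖ := Finset.sum_le_sum fun i _ => hcoord i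
        _ = 3 * ‖x‖ := by simp
    have h1 : ∑ i, -(c/3 * |v i|) = -(c/3 * ∑ i, |v i|) := by
      simp [Finset.mul_sum]
    rw [h1]
    have : c/3 * ∑ i, |v i| ≤ c * ‖x‖ := by
      calc c/3 * ∑ i, |v i| ≤ c/3 * (3*‖x‖) := by
            apply mul_le_mul_of_nonneg_left hsum (by positivity)
        _ = c * ‖x‖ := by ring
    linarith

lemma aux_rpow_le_exp {p c t : ℝ} (hp : 0 < p) (hc : 0 < c) (ht : 0 ≤ t) :
    t ^ p ≤ (p / c) ^ p * Real.exp (c * t) := by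
  have h1 : t ≤ Real.exp (c * t / p) * (p / c) := by
    have h2 : c * t / p ≤ Real.exp (c * t / p) :=
      le_trans (by linarith) (Real.add_one_le_exp _)
    calc t = (c * t / p) * (p / c) := by field_simp
      _ ≤ Real.exp (c * t / p) * (p / c) := by
          apply mul_le_mul_of_nonneg_right h2 (by positivity)
  calc t ^ p ≤ (Real.exp (c * t / p) * (p / c)) ^ p :=
        Real.rpow_le_rpow ht h1 hp.le
    _ = (p / c) ^ p * Real.exp (c * t) := by
        rw [Real.mul_rpow (Real.exp_pos _).le (by positivity), ← Real.exp_mul]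
        rw [div_mul_cancel₀ _ hp.ne']
        ring

/-- Refined potential-energy estimate at a flat minimum point: if `0 ≤ V ≤ C₁|x−x₀|^p`
near `x₀` (with `2 ≤ R`) and `Q` decays exponentially, then
`∫ V |Q^τ|² ≤ C₁ τ^{−p} ∫ |x|^p Q² + O(τ^{−∞})` as `τ → ∞`. -/
theorem stmt_11 (V Q φ : EuclideanSpace ℝ (Fin 3) → ℝ) (x₀ : EuclideanSpace ℝ (Fin 3))
    (p C₁ R C c : ℝ) (hp : 0 < p) (hC₁ : 0 < C₁) (hR : 2 ≤ R) (hc : 0 < c)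
    (hVmeas : Measurable V) (hV0 : ∀ x, 0 ≤ V x)
    (hV : ∀ x, ‖x - x₀‖ ≤ R → V x ≤ C₁ * ‖x - x₀‖ ^ p)
    (hQmeas : Measurable Q)
    (hQdecay : ∀ x, |Q x| ≤ C * exp (-c * ‖x‖))
    (hφsmooth : ContDiff ℝ (⊤ : ℕ∞) φ)
    (hφsupp : tsupport φ ⊆ Metric.closedBall (0 : EuclideanSpace ℝ (Fin 3)) 2)
    (hφ01 : ∀ x, 0 ≤ φ x ∧ φ x ≤ 1)
    (hφ1 : ∀ x ∈ Metric.closedBall (0 : EuclideanSpace ℝ (Fin 3)) 1, φ x = 1) :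
    ∃ f : ℝ → ℝ,
      (∀ s > (0 : ℝ), Tendsto (fun τ => τ ^ s * |f τ|) atTop (nhds 0)) ∧
      ∀ᶠ τ in atTop,
        (∫ x, V x * (τ ^ ((3 : ℝ) / 2) * φ (x - x₀) * Q (τ • (x - x₀))) ^ 2)
          ≤ C₁ * τ ^ (-p) * (∫ x, ‖x‖ ^ p * (Q x) ^ 2) + f τ := by
  classical
  have hC0 : 0 ≤ C := by
    have h := hQdecay 0
    have : (0:ℝ) ≤ C * exp (-c * ‖(0 : EuclideanSpace ℝ (Fin 3))‖) :=
      le_trans (abs_nonneg _) h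
    simpa using this
  set g : EuclideanSpace ℝ (Fin 3) → ℝ := fun y => ‖y‖ ^ p * Q y ^ 2 with hgdef
  have hgmeas : Measurable g :=
    ((continuous_norm.rpow_const fun _ => Or.inr hp.le).measurable).mul (hQmeas.pow_const 2)
  have hgnonneg : ∀ y, 0 ≤ g y := fun y => by
    apply mul_nonneg (Real.rpow_nonneg (norm_nonneg _) _) (sq_nonneg _)
  have hgint : Integrable g := by
    refine ((aux_intE hc).const_mul ((p/c)^p * C^2)).mono'
      hgmeas.aestronglyMeasurable (ae_of_all _ fun y => ?_)
    rw [Real.norm_of_nonneg (hgnonneg y)]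
    have h1 : ‖y‖ ^ p ≤ (p/c)^p * Real.exp (c * ‖y‖) :=
      aux_rpow_le_exp hp hc (norm_nonneg y)
    have h2 : Q y ^ 2 ≤ (C * Real.exp (-c * ‖y‖)) ^ 2 := by
      rw [← sq_abs]
      exact pow_le_pow_left₀ (abs_nonneg _) (hQdecay y) 2
    have h3 : Real.exp (c * ‖y‖) * (C * Real.exp (-c * ‖y‖)) ^ 2
        = C ^ 2 * Real.exp (-(c * ‖y‖)) := by
      rw [mul_pow, sq (Real.exp _), ← Real.exp_add,
        show Real.exp (c * ‖y‖) * (C ^ 2 * Real.exp (-c * ‖y‖ + -c * ‖y‖))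
          = C ^ 2 * (Real.exp (c * ‖y‖) * Real.exp (-c * ‖y‖ + -c * ‖y‖)) from by ring,
        ← Real.exp_add]
      congr 1
      ring
    calc g y ≤ ((p/c)^p * Real.exp (c * ‖y‖)) * (C * Real.exp (-c * ‖y‖)) ^ 2 := by
          apply mul_le_mul h1 h2 (sq_nonneg _) (by positivity)
      _ = (p/c)^p * C^2 * Real.exp (-(c * ‖y‖)) := by
          rw [mul_assoc, h3]; ring
  refine ⟨fun _ => 0, fun s _ => by simpa using tendsto_const_nhds, ?_⟩
  filter_upwards [eventually_ge_atTop (1:ℝ)] with τ hτ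
  have hτ0 : (0:ℝ) < τ := lt_of_lt_of_le one_pos hτ
  -- pointwise bound
  have hpt : ∀ x, V x * (τ ^ ((3:ℝ)/2) * φ (x - x₀) * Q (τ • (x - x₀))) ^ 2
      ≤ (C₁ * τ ^ (-p) * τ ^ (3:ℕ)) * g (τ • (x - x₀)) := by
    intro x
    have hτ32 : (τ ^ ((3:ℝ)/2)) ^ 2 = τ ^ (3:ℕ) := by
      rw [← Real.rpow_natCast (τ ^ ((3:ℝ)/2)) 2, ← Real.rpow_mul hτ0.le,
        ← Real.rpow_natCast τ 3]
      norm_num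
    rcases eq_or_ne (φ (x - x₀)) 0 with h0 | h0
    · rw [h0]
      have : V x * (τ ^ ((3:ℝ)/2) * 0 * Q (τ • (x - x₀))) ^ 2 = 0 := by ring
      rw [this]
      have := hgnonneg (τ • (x - x₀))
      positivity
    · have hmem : x - x₀ ∈ Metric.closedBall (0 : EuclideanSpace ℝ (Fin 3)) 2 :=
        hφsupp (subset_tsupport φ h0)
      have hv2 : ‖x - x₀‖ ≤ 2 := by
        simpa [Metric.mem_closedBall, dist_zero_right] using hmem
      have hVx : V x ≤ C₁ * ‖x - x₀‖ ^ p := hV x (hv2.trans hR)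
      have hφ2 : φ (x - x₀) ^ 2 ≤ 1 := by
        have h := hφ01 (x - x₀)
        nlinarith [h.1, h.2]
      have hnorm : ‖x - x₀‖ ^ p = τ ^ (-p) * ‖τ • (x - x₀)‖ ^ p := by
        rw [norm_smul, Real.norm_of_nonneg hτ0.le,
          Real.mul_rpow hτ0.le (norm_nonneg _), ← mul_assoc,
          ← Real.rpow_add hτ0]
        simp
      have hsq : (τ ^ ((3:ℝ)/2) * φ (x - x₀) * Q (τ • (x - x₀))) ^ 2
          = τ ^ (3:ℕ) * (φ (x - x₀) ^ 2 * Q (τ • (x - x₀)) ^ 2) := by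
        rw [← hτ32]; ring
      calc V x * (τ ^ ((3:ℝ)/2) * φ (x - x₀) * Q (τ • (x - x₀))) ^ 2
          = V x * (τ ^ (3:ℕ) * (φ (x - x₀) ^ 2 * Q (τ • (x - x₀)) ^ 2)) := by rw [hsq]
        _ ≤ (C₁ * ‖x - x₀‖ ^ p) * (τ ^ (3:ℕ) * (1 * Q (τ • (x - x₀)) ^ 2)) := by
            apply mul_le_mul hVx ?_ ?_ (by positivity)
            · apply mul_le_mul_of_nonneg_left ?_ (by positivity)
              apply mul_le_mul_of_nonneg_right hφ2 (sq_nonneg _)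
            · positivity
        _ = (C₁ * τ ^ (-p) * τ ^ (3:ℕ)) * g (τ • (x - x₀)) := by
            rw [hnorm, hgdef]; ring
  have hint : Integrable fun x => (C₁ * τ ^ (-p) * τ ^ (3:ℕ)) * g (τ • (x - x₀)) := by
    have h1 : Integrable fun y : EuclideanSpace ℝ (Fin 3) => g (τ • y) :=
      (integrable_comp_smul_iff volume g hτ0.ne').2 hgint
    exact (h1.comp_sub_right x₀).const_mul _
  have hle := integral_mono_of_nonneg
    (ae_of_all _ fun x => mul_nonneg (hV0 x) (sq_nonneg _)) hint (ae_of_all _ hpt)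
  have hcomp : (∫ x, (C₁ * τ ^ (-p) * τ ^ (3:ℕ)) * g (τ • (x - x₀)))
      = C₁ * τ ^ (-p) * (∫ x, ‖x‖ ^ p * Q x ^ 2) := by
    rw [integral_const_mul]
    have h1 : (∫ x, g (τ • (x - x₀))) = ∫ x, g (τ • x) :=
      integral_sub_right_eq_self (fun x => g (τ • x)) x₀
    rw [h1, Measure.integral_comp_smul volume g τ]
    have h2 : Module.finrank ℝ (EuclideanSpace ℝ (Fin 3)) = 3 := finrank_euclideanSpace_fin
    rw [h2]
    rw [abs_of_pos (by positivity), smul_eq_mul]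
    have h3 : (C₁ * τ ^ (-p) * τ ^ (3:ℕ)) * ((τ ^ (3:ℕ))⁻¹ * ∫ x, g x)
        = C₁ * τ ^ (-p) * (∫ x, g x) := by
      field_simp
    rw [h3]
  rw [hcomp] at hle
  simpa using hle
end
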